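/- Let M be the piecewise linear Orlicz function built from the sequence (b_j) of the counterexample construction (M(0)=0, M'(t)=b_n on (2^{-n-1},2^{-n}), with b_{s_n+k}=c_{n+1}/α_{n+1−k} etc.). Set t_n = 2^{-s_n} where s_n = n(n+1)/2. Then for every m ∈ ℕ, sup_n M(2^m t_n)/M(t_n) < ∞; in fact M(2^m t_n) ≤ (2^{m+1}/α_m)·M(t_n) for all n > m. -/

import Mathlib

open Filter Topology

/-- `α_0 = α_1 = α_2 = 1` and `α_j = (e/j)^j` for `j ≥ 3`. -/
noncomputable def alphaSeq : ℕ → ℝ := fun j => if j ≤ 2 then 1 else (Real.exp 1 / j) ^ j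

/-- `s_n = 1 + 2 + ⋯ + n = n(n+1)/2`. -/
def sTri (n : ℕ) : ℕ := n * (n + 1) / 2

/-- The sequence `(b j)` of the counterexample: `b 0 = c 0`, `b 1 = c 1`, and
`b (s n + k) = c (n+1) / α (n+1-k)` for `n ≥ 1`, `1 ≤ k ≤ n+1` (this determines `b`,
since every integer `≥ 2` is uniquely of this form). -/
def CounterB (c b : ℕ → ℝ) : Prop :=
  b 0 = c 0 ∧ b 1 = c 1 ∧
    ∀ n k : ℕ, 1 ≤ n → 1 ≤ k → k ≤ n + 1 →
      b (sTri n + k) = c (n + 1) / alphaSeq (n + 1 - k)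

/-- `M` is the continuous piecewise linear function with `M 0 = 0` and slope `b n` on
`(2^{-n-1}, 2^{-n})` (slope `b 0` beyond `1/2`). -/
def PiecewiseLinOrlicz (b : ℕ → ℝ) (M : ℝ → ℝ) : Prop :=
  M 0 = 0 ∧ ContinuousOn M (Set.Ici 0) ∧
    (∀ n : ℕ, ∀ t ∈ Set.Ioo ((2 : ℝ) ^ (-(n : ℤ) - 1)) ((2 : ℝ) ^ (-(n : ℤ))),
      HasDerivAt M (b n) t) ∧
    (∀ t : ℝ, 1 / 2 < t → HasDerivAt M (b 0) t)

/-!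
Since `b` is antitone, the slopes of `M` give `b j 2^{-j-1} ≤ M (2^{-j}) ≤ b j 2^{-j}`. For `n > m`,
`2^m t_n = 2^{-(s_n - m)}` and `b (s_n - m) = c n / α m = b (s_n) / α m`, so
`M (2^m t_n) ≤ (c n / α m) 2^m t_n ≤ (2^{m+1} / α m) M (t_n)`. The finitely many `n ≤ m`
only enlarge the constant, since `M (t_n) > 0`.
-/

theorem alphaSeq_pos (j : ℕ) : 0 < alphaSeq j := by
  unfold alphaSeq
  split_ifs with hj
  · exact one_pos
  · have : (0 : ℝ) < j := by exact_mod_cast (show 0 < j by omega)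
    positivity

theorem exp_one_div_le_one {j : ℕ} (hj : 3 ≤ j) : Real.exp 1 / j ≤ 1 := by
  have hj' : (3 : ℝ) ≤ j := by exact_mod_cast hj
  rw [div_le_one (by linarith)]
  linarith [Real.exp_one_lt_d9]

theorem alphaSeq_le_one (j : ℕ) : alphaSeq j ≤ 1 := by
  unfold alphaSeq
  split_ifs with hj
  · exact le_rfl
  · exact pow_le_one₀ (by positivity) (exp_one_div_le_one (by omega))

theorem alphaSeq_antitone : Antitone alphaSeq := by
  refine antitone_nat_of_succ_le fun j => ?_
  rcases lt_trichotomy j 2 with hj | rfl | hj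
  · simp [alphaSeq, show j + 1 ≤ 2 by omega, show j ≤ 2 by omega]
  · simpa [alphaSeq] using alphaSeq_le_one 3
  · have hj' : (3 : ℝ) ≤ j := by exact_mod_cast hj
    simp only [alphaSeq, if_neg (show ¬ j + 1 ≤ 2 by omega), if_neg (show ¬ j ≤ 2 by omega)]
    calc (Real.exp 1 / ((j + 1 : ℕ) : ℝ)) ^ (j + 1)
        ≤ (Real.exp 1 / ((j + 1 : ℕ) : ℝ)) ^ j :=
          pow_le_pow_of_le_one (by positivity) (exp_one_div_le_one (by omega)) j.le_succ
      _ ≤ (Real.exp 1 / j) ^ j := by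
          gcongr
          exact_mod_cast j.le_succ

theorem sTri_succ (n : ℕ) : sTri (n + 1) = sTri n + (n + 1) := by
  unfold sTri
  rw [show (n + 1) * (n + 1 + 1) = n * (n + 1) + (n + 1) * 2 by ring,
    Nat.add_mul_div_right _ _ two_pos]

theorem le_sTri (n : ℕ) : n ≤ sTri n := by
  induction n with
  | zero => exact le_rfl
  | succ n ih => rw [sTri_succ]; omega

theorem exists_eq_sTri_add {j : ℕ} (hj : 1 ≤ j) :
    ∃ n k, 1 ≤ k ∧ k ≤ n + 1 ∧ j = sTri n + k := by
  induction j, hj using Nat.le_induction with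
  | base => exact ⟨0, 1, le_rfl, le_rfl, rfl⟩
  | succ j _ ih =>
    obtain ⟨n, k, hk1, hkn, rfl⟩ := ih
    rcases hkn.lt_or_eq with hkn | rfl
    · exact ⟨n, k + 1, by omega, hkn, rfl⟩
    · exact ⟨n + 1, 1, le_rfl, by omega, by rw [sTri_succ]⟩

namespace CounterB

variable {c b : ℕ → ℝ}

/-- The defining formula also covers `b 1 = c 1`, as the case `n = 0`. -/
theorem eq_div (hb : CounterB c b) {n k : ℕ} (hk : 1 ≤ k) (hkn : k ≤ n + 1) :
    b (sTri n + k) = c (n + 1) / alphaSeq (n + 1 - k) := by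
  rcases Nat.eq_zero_or_pos n with rfl | hn
  · obtain rfl : k = 1 := by omega
    simpa [sTri, alphaSeq] using hb.2.1
  · exact hb.2.2 n k hn hk hkn

theorem sTri_sub (hb : CounterB c b) {m n : ℕ} (hmn : m < n) :
    b (sTri n - m) = c n / alphaSeq m := by
  obtain ⟨n, rfl⟩ : ∃ p, n = p + 1 := ⟨n - 1, by omega⟩
  have h := hb.eq_div (n := n) (k := n + 1 - m) (by omega) (by omega)
  rwa [show sTri n + (n + 1 - m) = sTri (n + 1) - m by rw [sTri_succ]; omega,
    show n + 1 - (n + 1 - m) = m by omega] at h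

theorem pos (hb : CounterB c b) (hc : ∀ j, 0 < c j) (j : ℕ) : 0 < b j := by
  rcases Nat.eq_zero_or_pos j with rfl | hj
  · exact hb.1 ▸ hc 0
  · obtain ⟨n, k, hk, hkn, rfl⟩ := exists_eq_sTri_add hj
    rw [hb.eq_div hk hkn]
    exact div_pos (hc _) (alphaSeq_pos _)

/-- Inside a block `b` decreases because `α` does; across the block boundary
`b (s (n+1)) = c (n+1)` and `b (s (n+1) + 1) = c (n+2) / α (n+1)`. -/
theorem antitone (hb : CounterB c b) (hc : ∀ j, 0 ≤ c j)
    (hcα : ∀ j, c (j + 1) ≤ alphaSeq j * c j) : Antitone b := by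
  refine antitone_nat_of_succ_le fun j => ?_
  rcases Nat.eq_zero_or_pos j with rfl | hj
  · simpa [hb.1, hb.2.1, alphaSeq] using hcα 0
  obtain ⟨n, k, hk, hkn, rfl⟩ := exists_eq_sTri_add hj
  rcases hkn.lt_or_eq with hkn | rfl
  · rw [add_assoc, hb.eq_div hk hkn.le, hb.eq_div (by omega) hkn]
    exact div_le_div_of_nonneg_left (hc _) (alphaSeq_pos _) (alphaSeq_antitone (by omega))
  · rw [← sTri_succ, hb.eq_div (n := n + 1) le_rfl (by omega), ← Nat.sub_zero (sTri (n + 1)),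
      hb.sTri_sub (by omega : 0 < n + 1), div_le_div_iff₀ (alphaSeq_pos _) (alphaSeq_pos _)]
    simpa [alphaSeq, mul_comm] using hcα (n + 1)

end CounterB

theorem two_zpow_neg_add_sub_one (i j : ℕ) :
    (2 : ℝ) ^ (-((i + j : ℕ) : ℤ) - 1) = (2 : ℝ) ^ (-(j : ℤ)) / 2 / 2 ^ i := by
  push_cast
  rw [show -((i : ℤ) + j) - 1 = -(j : ℤ) - 1 - i by ring, zpow_sub₀ two_ne_zero,
    zpow_sub₀ two_ne_zero]
  simp

theorem tendsto_two_zpow_neg_nhdsGE_zero :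
    Tendsto (fun i : ℕ => (2 : ℝ) ^ (-(i : ℤ))) atTop (𝓝[≥] 0) := by
  refine tendsto_nhdsWithin_iff.2 ⟨?_, Eventually.of_forall fun i => Set.mem_Ici.2 (by positivity)⟩
  simp only [zpow_neg, zpow_natCast]
  exact tendsto_inv_atTop_zero.comp (tendsto_pow_atTop_atTop_of_one_lt one_lt_two)

namespace PiecewiseLinOrlicz

variable {b : ℕ → ℝ} {M : ℝ → ℝ}

theorem sub_succ (hM : PiecewiseLinOrlicz b M) (j : ℕ) :
    M (2 ^ (-(j : ℤ))) - M (2 ^ (-((j + 1 : ℕ) : ℤ))) = b j * 2 ^ (-(j : ℤ) - 1) := by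
  have hj : (2 : ℝ) ^ (-((j + 1 : ℕ) : ℤ)) = 2 ^ (-(j : ℤ) - 1) := by push_cast; ring_nf
  have hlt : (2 : ℝ) ^ (-(j : ℤ) - 1) < 2 ^ (-(j : ℤ)) :=
    zpow_lt_zpow_right₀ one_lt_two (by omega)
  obtain ⟨_, _, hslope⟩ := exists_hasDerivAt_eq_slope M (fun _ => b j) hlt
    (hM.2.1.mono fun t ht => Set.mem_Ici.2 ((zpow_pos two_pos _).le.trans ht.1)) (hM.2.2.1 j)
  have hlen : (2 : ℝ) ^ (-(j : ℤ)) - 2 ^ (-(j : ℤ) - 1) = 2 ^ (-(j : ℤ) - 1) := by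
    rw [zpow_sub_one₀ two_ne_zero]
    ring
  rw [hj, hslope, hlen, div_mul_cancel₀ _ (zpow_pos two_pos _).ne']

/-- `M (2^{-j})` is the integral of its slopes over `(0, 2^{-j})`. -/
theorem hasSum (hM : PiecewiseLinOrlicz b M) (hb : 0 ≤ b) (j : ℕ) :
    HasSum (fun i => b (i + j) * 2 ^ (-((i + j : ℕ) : ℤ) - 1)) (M (2 ^ (-(j : ℤ)))) := by
  refine (hasSum_iff_tendsto_nat_of_nonneg (fun i => mul_nonneg (hb _) (by positivity)) _).2 ?_
  have hM0 : Tendsto (fun N : ℕ => M (2 ^ (-((N + j : ℕ) : ℤ)))) atTop (𝓝 0) := by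
    have := (hM.2.1 0 Set.self_mem_Ici).tendsto.comp
      (tendsto_two_zpow_neg_nhdsGE_zero.comp (tendsto_add_atTop_nat j))
    rwa [hM.1, ← Function.comp_assoc] at this
  have hsum (N : ℕ) : ∑ i ∈ Finset.range N, b (i + j) * 2 ^ (-((i + j : ℕ) : ℤ) - 1) =
      M (2 ^ (-(j : ℤ))) - M (2 ^ (-((N + j : ℕ) : ℤ))) := by
    have := Finset.sum_range_sub' (fun i => M (2 ^ (-((i + j : ℕ) : ℤ)))) N
    rw [zero_add] at this
    rw [← this]
    exact Finset.sum_congr rfl fun i _ => by rw [← hM.sub_succ, Nat.add_right_comm]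
  refine (tendsto_congr hsum).2 ?_
  simpa only [sub_zero] using tendsto_const_nhds.sub hM0

theorem mul_le (hM : PiecewiseLinOrlicz b M) (hb : 0 ≤ b) (j : ℕ) :
    b j * 2 ^ (-(j : ℤ) - 1) ≤ M (2 ^ (-(j : ℤ))) := by
  simpa using le_hasSum (hM.hasSum hb j) 0 fun i _ => mul_nonneg (hb _) (by positivity)

theorem le_mul (hM : PiecewiseLinOrlicz b M) (hb : 0 ≤ b) (hanti : Antitone b) (j : ℕ) :
    M (2 ^ (-(j : ℤ))) ≤ b j * 2 ^ (-(j : ℤ)) := by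
  refine hasSum_le (fun i => ?_) (hM.hasSum hb j) (hasSum_geometric_two' (b j * 2 ^ (-(j : ℤ))))
  rw [two_zpow_neg_add_sub_one, mul_div_assoc, mul_div_assoc]
  exact mul_le_mul_of_nonneg_right (hanti (Nat.le_add_left j i)) (by positivity)

end PiecewiseLinOrlicz

theorem exists_forall_le_mul_of_forall_lt {f g : ℕ → ℝ} {A : ℝ} {m : ℕ} (hg : ∀ n, 0 < g n)
    (h : ∀ n, m < n → f n ≤ A * g n) : ∃ C, ∀ n, f n ≤ C * g n := by
  obtain ⟨C₀, hC₀⟩ := ((Finset.range (m + 1)).finite_toSet.image fun n => f n / g n).bddAbove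
  refine ⟨max A C₀, fun n => ?_⟩
  rcases le_or_gt n m with hn | hn
  · have hratio : f n / g n ≤ C₀ := hC₀ ⟨n, Finset.mem_range.2 (by omega), rfl⟩
    rw [div_le_iff₀ (hg n)] at hratio
    exact hratio.trans (mul_le_mul_of_nonneg_right (le_max_right _ _) (hg n).le)
  · exact (h n hn).trans (mul_le_mul_of_nonneg_right (le_max_left _ _) (hg n).le)

theorem counterexample_ratio_bounded_general (c b : ℕ → ℝ) (hcpos : ∀ j, 0 < c j)
    (hcrec : ∀ j : ℕ, c (j + 1) ≤ alphaSeq j * alphaSeq (2 * j ^ 2) * c j)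
    (hb : CounterB c b) (M : ℝ → ℝ) (hPWL : PiecewiseLinOrlicz b M) :
    ∀ m : ℕ,
      (∀ n : ℕ, m < n →
        M ((2 : ℝ) ^ m * (2 : ℝ) ^ (-(sTri n : ℤ))) ≤
          (2 : ℝ) ^ (m + 1) / alphaSeq m * M ((2 : ℝ) ^ (-(sTri n : ℤ)))) ∧
      ∃ C : ℝ, ∀ n : ℕ, 1 ≤ n →
        M ((2 : ℝ) ^ m * (2 : ℝ) ^ (-(sTri n : ℤ))) ≤ C * M ((2 : ℝ) ^ (-(sTri n : ℤ))) := by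
  have hbpos := hb.pos hcpos
  have hbnonneg : 0 ≤ b := fun j => (hbpos j).le
  have hbanti : Antitone b := hb.antitone (fun j => (hcpos j).le) fun j =>
    (hcrec j).trans <| mul_le_mul_of_nonneg_right
      (mul_le_of_le_one_right (alphaSeq_pos j).le (alphaSeq_le_one _)) (hcpos j).le
  intro m
  have hratio (n : ℕ) (hmn : m < n) :
      M (2 ^ m * 2 ^ (-(sTri n : ℤ))) ≤ 2 ^ (m + 1) / alphaSeq m * M (2 ^ (-(sTri n : ℤ))) := by
    have hm : (2 : ℝ) ^ m * 2 ^ (-(sTri n : ℤ)) = 2 ^ (-((sTri n - m : ℕ) : ℤ)) := by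
      rw [← zpow_natCast, ← zpow_add₀ two_ne_zero, Nat.cast_sub ((le_sTri n).trans' hmn.le)]
      ring_nf
    have hsn : b (sTri n) = c n := by
      simpa [alphaSeq] using hb.sTri_sub (n := n) (m := 0) (by omega)
    calc M (2 ^ m * 2 ^ (-(sTri n : ℤ)))
        ≤ b (sTri n - m) * (2 ^ m * 2 ^ (-(sTri n : ℤ))) := hm ▸ hPWL.le_mul hbnonneg hbanti _
      _ = 2 ^ (m + 1) / alphaSeq m * (b (sTri n) * 2 ^ (-(sTri n : ℤ) - 1)) := by
          rw [hb.sTri_sub hmn, hsn, zpow_sub_one₀ two_ne_zero]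
          field_simp [(alphaSeq_pos m).ne']
          ring
      _ ≤ 2 ^ (m + 1) / alphaSeq m * M (2 ^ (-(sTri n : ℤ))) :=
          mul_le_mul_of_nonneg_left (hPWL.mul_le hbnonneg _)
            (div_pos (by positivity) (alphaSeq_pos m)).le
  obtain ⟨C, hC⟩ := exists_forall_le_mul_of_forall_lt (fun n =>
      (mul_pos (hbpos _) (by positivity)).trans_le (hPWL.mul_le hbnonneg (sTri n))) hratio
  exact ⟨hratio, C, fun n _ => hC n⟩

/-- For the piecewise linear Orlicz function `M` built from the
counterexample sequence `(b j)`, with `t_n = 2^{-s_n}`, one has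
`M(2^m t_n) ≤ (2^{m+1}/α_m) M(t_n)` for all `n > m`; in particular
`sup_n M(2^m t_n)/M(t_n) < ∞` for every `m`. -/
theorem counterexample_ratio_bounded (c b : ℕ → ℝ) (hcpos : ∀ j, 0 < c j)
    (hcdec : Antitone c)
    (hcrec : ∀ j : ℕ, c (j + 1) ≤ alphaSeq j * alphaSeq (2 * j ^ 2) * c j)
    (hb : CounterB c b) (M : ℝ → ℝ) (hPWL : PiecewiseLinOrlicz b M) :
    ∀ m : ℕ,
      (∀ n : ℕ, m < n →
        M ((2 : ℝ) ^ m * (2 : ℝ) ^ (-(sTri n : ℤ))) ≤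
          (2 : ℝ) ^ (m + 1) / alphaSeq m * M ((2 : ℝ) ^ (-(sTri n : ℤ)))) ∧
      ∃ C : ℝ, ∀ n : ℕ, 1 ≤ n →
        M ((2 : ℝ) ^ m * (2 : ℝ) ^ (-(sTri n : ℤ))) ≤ C * M ((2 : ℝ) ^ (-(sTri n : ℤ))) :=
  counterexample_ratio_bounded_general c b hcpos hcrec hb M hPWL
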